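/- If each block subproblem of a separable objective f(θ¹,…,θ^d) = g(θ¹,…,θ^d) + ∑_t h_t(θ^t), where g is continuously differentiable and convex and each h_t is convex (possibly nondifferentiable), attains a unique minimum, then any accumulation point of the cyclic block coordinate descent iterates is a coordinatewise minimum: at the accumulation point θ*, for each block t, θ*^t minimizes f over θ^t with all other blocks fixed at θ*. -/

import Mathlib

/-!
The values `f θₖ` decrease, and by continuity along the subsequence they converge to `f θ*`.
If `θₖ → θ*` along steps that update block `t`, passing to the limit in
`f θₖ₊₁ ≤ f (update θₖ t u)` shows that `θ*` is minimal in block `t`, and then also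
`θₖ₊₁ → θ*`: the new block minimises the convex function `u ↦ f (update θₖ t u)`, whose limit
`u ↦ f (update θ* t u)` has `θ*ₜ` as strict minimiser. By compactness of a small sphere around
`θ*ₜ`, for `θₖ` close to `θ*` these functions are still larger on the sphere than at its
centre, and convexity traps their minimisers inside it. Hence convergence passes from `θₖ` to
`θₖ₊₁` along the accumulating subsequence, and so to all its bounded shifts, one of which lands
on any prescribed block.
-/

open Filter Topology Set Function Metric Fin.NatCast

theorem ConvexOn.dist_lt_of_le_of_lt_on_sphere {V : Type*} [NormedAddCommGroup V]
    [NormedSpace ℝ V] {φ : V → ℝ} (hφ : ConvexOn ℝ univ φ) {w v : V} {r : ℝ} (hr : 0 < r)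
    (hsphere : ∀ s ∈ sphere w r, φ w < φ s) (hv : φ v ≤ φ w) : dist v w < r := by
  by_contra! hrv
  have hpos : 0 < dist v w := hr.trans_le hrv
  have hs_sphere : AffineMap.lineMap w v (r / dist v w) ∈ sphere w r := by
    rw [mem_sphere, dist_eq_norm, AffineMap.lineMap_apply_module', add_sub_cancel_right,
      norm_smul, Real.norm_of_nonneg (by positivity), ← dist_eq_norm, div_mul_cancel₀ _ hpos.ne']
  have hs_segment : AffineMap.lineMap w v (r / dist v w) ∈ segment ℝ w v :=
    lineMap_mem_segment ℝ w v ⟨by positivity, (div_le_one hpos).2 hrv⟩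
  have hle := hφ.le_on_segment trivial trivial hs_segment
  rw [max_eq_left hv] at hle
  exact (hsphere _ hs_sphere).not_ge hle

theorem eventually_forall_sphere_apply_lt {X V : Type*} [TopologicalSpace X]
    [NormedAddCommGroup V] [ProperSpace V] {F : X → V → ℝ} (hF : Continuous (uncurry F))
    {x₀ : X} {w : V} (hw : ∀ u ≠ w, F x₀ w < F x₀ u) {r : ℝ} (hr : 0 < r) :
    ∀ᶠ x in 𝓝 x₀, ∀ s ∈ sphere w r, F x w < F x s := by
  refine (isCompact_sphere w r).eventually_forall_of_forall_eventually fun s hs => ?_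
  exact ContinuousAt.eventually_lt (f := fun z : X × V => F z.1 w) (g := uncurry F)
    (hF.comp (continuous_fst.prodMk continuous_const)).continuousAt hF.continuousAt
    (hw s (ne_of_mem_sphere hs hr.ne'))

theorem tendsto_of_apply_le_of_strictMin {α X V : Type*} [TopologicalSpace X]
    [NormedAddCommGroup V] [NormedSpace ℝ V] [ProperSpace V] {F : X → V → ℝ}
    (hF : Continuous (uncurry F)) (hconv : ∀ x, ConvexOn ℝ univ (F x)) {x₀ : X} {w : V}
    (hw : ∀ u ≠ w, F x₀ w < F x₀ u) {l : Filter α} {x : α → X} {v : α → V}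
    (hx : Tendsto x l (𝓝 x₀)) (hv : ∀ᶠ k in l, F (x k) (v k) ≤ F (x k) w) :
    Tendsto v l (𝓝 w) :=
  tendsto_nhds.2 fun _ hr =>
    ((hx.eventually (eventually_forall_sphere_apply_lt hF hw hr)).and hv).mono
      fun k hk => (hconv (x k)).dist_lt_of_le_of_lt_on_sphere hr hk.1 hk.2

theorem Filter.tendsto_of_forall_tendsto_inf_fiber {α β γ : Type*} [Finite β] {l : Filter α}
    {F : Filter γ} {u : α → γ} (c : α → β) (h : ∀ i, Tendsto u (l ⊓ 𝓟 {k | c k = i}) F) :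
    Tendsto u l F := fun _ hs =>
  (eventually_all.2 fun i => mem_inf_principal.1 (h i hs)).mono fun k hk => hk (c k) rfl

theorem Antitone.tendsto_atTop_of_tendsto {ι α : Type*} [Preorder ι]
    [ConditionallyCompleteLinearOrder α] [TopologicalSpace α] [OrderTopology α] {u : ι → α}
    (hu : Antitone u) {l : Filter ι} [l.NeBot] (hl : l ≤ atTop) {a : α}
    (h : Tendsto u l (𝓝 a)) : Tendsto u atTop (𝓝 a) := by
  have hbdd : BddBelow (range u) := ⟨a, forall_mem_range.2 fun k =>
    _root_.le_of_tendsto h (((eventually_ge_atTop k).filter_mono hl).mono fun _ hn => hu hn)⟩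
  have hinf := tendsto_atTop_ciInf hu hbdd
  rwa [tendsto_nhds_unique (hinf.mono_left hl) h] at hinf

theorem ConvexOn.comp_update {ι : Type*} {V : ι → Type*} [DecidableEq ι]
    [∀ i, AddCommMonoid (V i)] [∀ i, Module ℝ (V i)] {f : (∀ i, V i) → ℝ}
    (hf : ConvexOn ℝ univ f) (θ : ∀ i, V i) (t : ι) :
    ConvexOn ℝ univ fun u => f (update θ t u) := by
  refine ⟨convex_univ, fun x _ y _ a b ha hb hab => ?_⟩
  have hcomb : update θ t (a • x + b • y) = a • update θ t x + b • update θ t y := by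
    rw [← update_smul, ← update_smul, ← update_add, Convex.combo_self hab]
  simpa only [hcomb] using hf.2 trivial trivial ha hb hab

theorem convexOn_sum_apply {ι : Type*} {V : ι → Type*} [Fintype ι] [∀ i, AddCommMonoid (V i)]
    [∀ i, Module ℝ (V i)] {h : ∀ i, V i → ℝ} (hh : ∀ i, ConvexOn ℝ univ (h i)) :
    ConvexOn ℝ univ fun θ : (∀ i, V i) => ∑ i, h i (θ i) := by
  refine ⟨convex_univ, fun x _ y _ a b ha hb hab => ?_⟩
  simp only [Pi.add_apply, Pi.smul_apply, Finset.smul_sum, ← Finset.sum_add_distrib]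
  exact Finset.sum_le_sum fun i _ => (hh i).2 trivial trivial ha hb hab

def IsEssentiallyCyclic {ι : Type*} (c : ℕ → ι) (N : ℕ) : Prop :=
  ∀ t n, ∃ j < N, c (n + j) = t

theorem isEssentiallyCyclic_natCast (d : ℕ) [NeZero d] :
    IsEssentiallyCyclic (fun k : ℕ => (k : Fin d)) d := fun t n =>
  ⟨(t - (n : Fin d)).val, (t - (n : Fin d)).isLt, by simp⟩

section BlockDescent

variable {ι V : Type*} [DecidableEq ι] {f : (ι → V) → ℝ}

def IsBlockMinStep (f : (ι → V) → ℝ) (t : ι) (θ θ' : ι → V) : Prop :=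
  θ' = update θ t (θ' t) ∧ ∀ u, f θ' ≤ f (update θ t u)

def IsBlockCoordDescent (f : (ι → V) → ℝ) (c : ℕ → ι) (θ : ℕ → ι → V) : Prop :=
  ∀ k, IsBlockMinStep f (c k) (θ k) (θ (k + 1))

theorem IsBlockMinStep.apply_le {t : ι} {θ θ' : ι → V} (h : IsBlockMinStep f t θ θ') :
    f θ' ≤ f θ := by
  simpa using h.2 (θ t)

theorem IsBlockCoordDescent.antitone {c : ℕ → ι} {θ : ℕ → ι → V}
    (hθ : IsBlockCoordDescent f c θ) : Antitone (f ∘ θ) :=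
  antitone_nat_of_succ_le fun k => (hθ k).apply_le

theorem lt_apply_update_of_existsUnique {θ : ι → V} {t : ι}
    (hmin : ∀ u, f θ ≤ f (update θ t u))
    (huniq : ∃! v, ∀ u, f (update θ t v) ≤ f (update θ t u)) :
    ∀ u ≠ θ t, f θ < f (update θ t u) := by
  intro u hu
  by_contra! hle
  exact hu (huniq.unique (fun u' => hle.trans (hmin u')) (by simpa using hmin))

theorem le_apply_update_of_isBlockMinStep [TopologicalSpace V] {α : Type*} {l : Filter α}
    [l.NeBot] {t : ι} {θ : ι → V} {a b : α → ι → V} (hf : Continuous f)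
    (ha : Tendsto a l (𝓝 θ)) (hfb : Tendsto (f ∘ b) l (𝓝 (f θ)))
    (hstep : ∀ᶠ k in l, IsBlockMinStep f t (a k) (b k)) (u : V) : f θ ≤ f (update θ t u) :=
  le_of_tendsto_of_tendsto hfb ((hf.tendsto _).comp (ha.update t tendsto_const_nhds))
    (hstep.mono fun _ hk => hk.2 u)

theorem IsBlockCoordDescent.tendsto_objective [TopologicalSpace V] {c : ℕ → ι} {θ : ℕ → ι → V}
    (hθ : IsBlockCoordDescent f c θ) (hf : Continuous f) {θ₀ : ι → V} {l : Filter ℕ} [l.NeBot]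
    (hl : l ≤ atTop) (hacc : Tendsto θ l (𝓝 θ₀)) : Tendsto (f ∘ θ) atTop (𝓝 (f θ₀)) :=
  hθ.antitone.tendsto_atTop_of_tendsto hl ((hf.tendsto θ₀).comp hacc)

variable [NormedAddCommGroup V] [NormedSpace ℝ V] [ProperSpace V]

theorem tendsto_of_isBlockMinStep {α : Type*} {l : Filter α} {t : ι} {θ : ι → V}
    {a b : α → ι → V} (hf : Continuous f) (hconv : ConvexOn ℝ univ f)
    (hθ : ∀ u ≠ θ t, f θ < f (update θ t u)) (ha : Tendsto a l (𝓝 θ))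
    (hstep : ∀ᶠ k in l, IsBlockMinStep f t (a k) (b k)) : Tendsto b l (𝓝 θ) := by
  have hblock : Tendsto (fun k => b k t) l (𝓝 (θ t)) :=
    tendsto_of_apply_le_of_strictMin (F := fun x u => f (update x t u))
      (hf.comp (continuous_fst.update t continuous_snd)) (fun x => hconv.comp_update x t)
      (by simpa using hθ) ha (hstep.mono fun k hk => by rw [← hk.1]; exact hk.2 (θ t))
  have hupdate := ha.update t hblock
  rw [update_eq_self] at hupdate
  exact hupdate.congr' (hstep.mono fun k hk => hk.1.symm)

namespace IsBlockCoordDescent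

variable [Finite ι] {c : ℕ → ι} {θ : ℕ → ι → V} {θ₀ : ι → V}

theorem tendsto_comp_succ (hθ : IsBlockCoordDescent f c θ) (hf : Continuous f)
    (hconv : ConvexOn ℝ univ f) (huniq : ∀ t, ∃! v, ∀ u, f (update θ₀ t v) ≤ f (update θ₀ t u))
    (hfθ : Tendsto (f ∘ θ) atTop (𝓝 (f θ₀))) {α : Type*} {l : Filter α} {ψ : α → ℕ}
    (hψ : Tendsto ψ l atTop) (ha : Tendsto (θ ∘ ψ) l (𝓝 θ₀)) :
    Tendsto (fun k => θ (ψ k + 1)) l (𝓝 θ₀) := by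
  refine tendsto_of_forall_tendsto_inf_fiber (fun k => c (ψ k)) fun t => ?_
  rcases (l ⊓ 𝓟 {k | c (ψ k) = t}).eq_or_neBot with hbot | hne
  · rw [hbot]
    exact tendsto_bot
  have hstep : ∀ᶠ k in l ⊓ 𝓟 {k | c (ψ k) = t},
      IsBlockMinStep f t (θ (ψ k)) (θ (ψ k + 1)) :=
    mem_inf_principal.2 (Eventually.of_forall fun k hk => hk ▸ hθ (ψ k))
  have ha' : Tendsto (θ ∘ ψ) (l ⊓ 𝓟 {k | c (ψ k) = t}) (𝓝 θ₀) := ha.mono_left inf_le_left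
  have hmin := le_apply_update_of_isBlockMinStep hf ha'
    ((hfθ.comp ((tendsto_add_atTop_nat 1).comp hψ)).mono_left inf_le_left) hstep
  exact tendsto_of_isBlockMinStep hf hconv (lt_apply_update_of_existsUnique hmin (huniq t)) ha'
    hstep

theorem tendsto_comp_add (hθ : IsBlockCoordDescent f c θ) (hf : Continuous f)
    (hconv : ConvexOn ℝ univ f) (huniq : ∀ t, ∃! v, ∀ u, f (update θ₀ t v) ≤ f (update θ₀ t u))
    {l : Filter ℕ} [l.NeBot] (hl : l ≤ atTop) (hacc : Tendsto θ l (𝓝 θ₀)) (j : ℕ) :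
    Tendsto (fun k => θ (k + j)) l (𝓝 θ₀) := by
  induction j with
  | zero => simpa using hacc
  | succ j ih =>
    exact hθ.tendsto_comp_succ hf hconv huniq (hθ.tendsto_objective hf hl hacc)
      ((tendsto_add_atTop_nat j).mono_left hl) ih

theorem le_apply_update (hθ : IsBlockCoordDescent f c θ) (hf : Continuous f)
    (hconv : ConvexOn ℝ univ f) (huniq : ∀ t, ∃! v, ∀ u, f (update θ₀ t v) ≤ f (update θ₀ t u))
    {N : ℕ} (hc : IsEssentiallyCyclic c N) {l : Filter ℕ} [l.NeBot] (hl : l ≤ atTop)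
    (hacc : Tendsto θ l (𝓝 θ₀)) (t : ι) (u : V) : f θ₀ ≤ f (update θ₀ t u) := by
  choose j hjN hj using hc t
  have hshift : Tendsto (fun k => θ (k + j k)) l (𝓝 θ₀) :=
    tendsto_of_forall_tendsto_inf_fiber (fun k => (⟨j k, hjN k⟩ : Fin N)) fun i =>
      ((hθ.tendsto_comp_add hf hconv huniq hl hacc i).mono_left inf_le_left).congr'
        (mem_inf_principal.2 (Eventually.of_forall fun k hk => by subst hk; rfl))
  have hnext : Tendsto (fun k => k + j k + 1) l atTop :=
    tendsto_atTop_mono (fun k => show k ≤ k + j k + 1 by omega) (tendsto_id.mono_left hl)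
  exact le_apply_update_of_isBlockMinStep hf hshift
    ((hθ.tendsto_objective hf hl hacc).comp hnext)
    (Eventually.of_forall fun k => hj k ▸ hθ (k + j k)) u

end IsBlockCoordDescent

end BlockDescent

theorem bcd_accumulation_point_coordinatewise_min_general {d q : ℕ} (hd : 0 < d)
    (g : (Fin d → (Fin q → ℝ)) → ℝ)
    (hg_convex : ConvexOn ℝ Set.univ g)
    (h : Fin d → (Fin q → ℝ) → ℝ) (hh_convex : ∀ t, ConvexOn ℝ Set.univ (h t))
    (f : (Fin d → (Fin q → ℝ)) → ℝ)
    (hf : f = fun θ => g θ + ∑ t, h t (θ t))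
    (huniq : ∀ (θ : Fin d → (Fin q → ℝ)) (t : Fin d),
      ∃! v : Fin q → ℝ, ∀ u : Fin q → ℝ,
        f (Function.update θ t v) ≤ f (Function.update θ t u))
    (θseq : ℕ → Fin d → (Fin q → ℝ))
    (hstep : ∀ k : ℕ,
      θseq (k + 1) = Function.update (θseq k) ⟨k % d, Nat.mod_lt k hd⟩
        (θseq (k + 1) ⟨k % d, Nat.mod_lt k hd⟩) ∧
      ∀ u : Fin q → ℝ, f (θseq (k + 1))
        ≤ f (Function.update (θseq k) ⟨k % d, Nat.mod_lt k hd⟩ u))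
    (θstar : Fin d → (Fin q → ℝ)) (φ : ℕ → ℕ) (hφ : StrictMono φ)
    (hacc : Filter.Tendsto (fun k => θseq (φ k)) Filter.atTop (nhds θstar)) :
    ∀ (t : Fin d) (v : Fin q → ℝ), f θstar ≤ f (Function.update θstar t v) := by
  have : NeZero d := ⟨hd.ne'⟩
  have hconv : ConvexOn ℝ univ f := hf ▸ hg_convex.add (convexOn_sum_apply hh_convex)
  have hcont : Continuous f := continuousOn_univ.mp (hconv.continuousOn isOpen_univ)
  have hbcd : IsBlockCoordDescent f (fun k => (k : Fin d)) θseq := fun k => by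
    show IsBlockMinStep f (k : Fin d) (θseq k) (θseq (k + 1))
    have hblock : (⟨k % d, Nat.mod_lt k hd⟩ : Fin d) = k := Fin.ext (Fin.val_natCast k d).symm
    rw [← hblock]
    exact hstep k
  exact hbcd.le_apply_update hcont hconv (huniq θstar) (isEssentiallyCyclic_natCast d)
    (l := map φ atTop) hφ.tendsto_atTop (tendsto_map'_iff.2 hacc)

/-- Tseng-type result for cyclic block coordinate descent on a separable
objective `f(θ) = g(θ) + ∑ t, h t (θ t)` with `g` convex and continuously
differentiable and each `h t` convex: if every block subproblem attains a
unique minimum, then any accumulation point of the cyclic BCD iterates is a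
coordinatewise minimum of `f`. -/
theorem bcd_accumulation_point_coordinatewise_min {d q : ℕ} (hd : 0 < d)
    (g : (Fin d → (Fin q → ℝ)) → ℝ)
    (hg_smooth : ContDiff ℝ 1 g) (hg_convex : ConvexOn ℝ Set.univ g)
    (h : Fin d → (Fin q → ℝ) → ℝ) (hh_convex : ∀ t, ConvexOn ℝ Set.univ (h t))
    (f : (Fin d → (Fin q → ℝ)) → ℝ)
    (hf : f = fun θ => g θ + ∑ t, h t (θ t))
    (huniq : ∀ (θ : Fin d → (Fin q → ℝ)) (t : Fin d),
      ∃! v : Fin q → ℝ, ∀ u : Fin q → ℝ,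
        f (Function.update θ t v) ≤ f (Function.update θ t u))
    (θseq : ℕ → Fin d → (Fin q → ℝ))
    (hstep : ∀ k : ℕ,
      θseq (k + 1) = Function.update (θseq k) ⟨k % d, Nat.mod_lt k hd⟩
        (θseq (k + 1) ⟨k % d, Nat.mod_lt k hd⟩) ∧
      ∀ u : Fin q → ℝ, f (θseq (k + 1))
        ≤ f (Function.update (θseq k) ⟨k % d, Nat.mod_lt k hd⟩ u))
    (θstar : Fin d → (Fin q → ℝ)) (φ : ℕ → ℕ) (hφ : StrictMono φ)
    (hacc : Filter.Tendsto (fun k => θseq (φ k)) Filter.atTop (nhds θstar)) :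
    ∀ (t : Fin d) (v : Fin q → ℝ), f θstar ≤ f (Function.update θstar t v) :=
  bcd_accumulation_point_coordinatewise_min_general hd g hg_convex h hh_convex f hf huniq θseq hstep
    θstar φ hφ hacc
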